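/- arXiv:1701.03699 — 2 statements merged into one kernel-verified Lean document; each statement's English description precedes it below -/
import Mathlib

section
/- For any positive integer n, the set of irreducible nonnegative integer square matrices A (of any size) with A² = nA is finite. -/
/-!
From `A² = n • A` we get `A ^ (m + 1) = n ^ m • A`, so irreducibility forces every entry of the
integer matrix `A` to be positive, hence at least `1`. Reading off the diagonal of
`A² = n • A` gives `n * A i i = ∑ l, A i l * A l i`; since every summand is at least `1` and the
summands include `A i i ^ 2` and `A i j * A j i ≥ A i j`, we obtain `A i i ≤ n`, the size `k ≤ n²`
and `A i j ≤ n²`. There are finitely many such matrices.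
-/

/-- Irreducibility of a nonnegative square integer matrix. -/
def Matrix.IsIrreducibleInt {k : ℕ} (A : Matrix (Fin k) (Fin k) ℤ) : Prop :=
  ∀ i j, ∃ m : ℕ, 1 ≤ m ∧ 0 < (A ^ m) i j

theorem pow_succ_eq_smul_of_sq_eq_smul {R A : Type*} [CommSemiring R] [Semiring A] [Algebra R A]
    {a : A} {c : R} (h : a ^ 2 = c • a) (m : ℕ) : a ^ (m + 1) = c ^ m • a := by
  induction m with
  | zero => simp
  | succ m ih => rw [pow_succ, ih, smul_mul_assoc, ← sq, h, smul_smul, ← pow_succ]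

namespace Matrix

theorem IsIrreducibleInt.pos_of_sq_eq_smul {k : ℕ} {A : Matrix (Fin k) (Fin k) ℤ} {c : ℤ}
    (hirr : A.IsIrreducibleInt) (hc : 0 ≤ c) (hA : A ^ 2 = c • A)
    (i j : Fin k) : 0 < A i j := by
  obtain ⟨m, hm, hpos⟩ := hirr i j
  obtain ⟨m, rfl⟩ := Nat.exists_eq_add_of_le' hm
  rw [pow_succ_eq_smul_of_sq_eq_smul hA, smul_apply, smul_eq_mul] at hpos
  exact pos_of_mul_pos_right hpos (pow_nonneg hc m)

section PositiveQuasiIdempotent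

variable {ι : Type*} [Fintype ι] [DecidableEq ι] {A : Matrix ι ι ℤ} {c : ℤ}

theorem smul_apply_eq_sum_of_sq_eq_smul (hA : A ^ 2 = c • A) (i j : ι) :
    c * A i j = ∑ l, A i l * A l j := by
  rw [← smul_eq_mul, ← smul_apply, ← hA, sq, mul_apply]

theorem card_le_mul_diag_of_sq_eq_smul (hpos : ∀ i j, 0 < A i j) (hA : A ^ 2 = c • A)
    (i : ι) : (Fintype.card ι : ℤ) ≤ c * A i i := by
  rw [smul_apply_eq_sum_of_sq_eq_smul hA, Fintype.card_eq_sum_ones, Nat.cast_sum, Nat.cast_one]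
  exact Finset.sum_le_sum fun l _ => one_le_mul_of_one_le_of_one_le (hpos i l) (hpos l i)

theorem apply_mul_apply_le_mul_diag_of_sq_eq_smul (hpos : ∀ i j, 0 < A i j)
    (hA : A ^ 2 = c • A) (i j : ι) : A i j * A j i ≤ c * A i i := by
  rw [smul_apply_eq_sum_of_sq_eq_smul hA]
  exact Finset.single_le_sum (fun l _ => (mul_pos (hpos i l) (hpos l i)).le) (Finset.mem_univ j)

theorem apply_le_mul_diag_of_sq_eq_smul (hpos : ∀ i j, 0 < A i j) (hA : A ^ 2 = c • A)
    (i j : ι) : A i j ≤ c * A i i :=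
  (le_mul_of_one_le_right (hpos i j).le (hpos j i)).trans
    (apply_mul_apply_le_mul_diag_of_sq_eq_smul hpos hA i j)

theorem diag_le_of_sq_eq_smul (hpos : ∀ i j, 0 < A i j) (hA : A ^ 2 = c • A)
    (i : ι) : A i i ≤ c :=
  le_of_mul_le_mul_right (apply_mul_apply_le_mul_diag_of_sq_eq_smul hpos hA i i) (hpos i i)

theorem mul_diag_le_sq_of_sq_eq_smul (hpos : ∀ i j, 0 < A i j) (hA : A ^ 2 = c • A)
    (i : ι) : c * A i i ≤ c ^ 2 := by
  have hc : 0 ≤ c := (hpos i i).le.trans (diag_le_of_sq_eq_smul hpos hA i)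
  rw [sq]
  exact mul_le_mul_of_nonneg_left (diag_le_of_sq_eq_smul hpos hA i) hc

end PositiveQuasiIdempotent

end Matrix

theorem finite_sigma_matrix_of_card_le_of_mem_Icc (N : ℕ) (B : ℤ) :
    {A : Σ k : ℕ, Matrix (Fin k) (Fin k) ℤ |
      A.1 ≤ N ∧ ∀ i j, A.2 i j ∈ Set.Icc 0 B}.Finite := by
  refine ((Set.finite_Iic N).biUnion fun k _ =>
    (Set.Finite.pi' fun _ : Fin k => Set.Finite.pi' fun _ : Fin k =>
      Set.finite_Icc 0 B).image (Sigma.mk k)).subset ?_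
  rintro ⟨k, A⟩ ⟨hk, hA⟩
  exact Set.mem_biUnion (x := k) hk ⟨A, hA, rfl⟩

theorem finite_quasi_idempotent_general (n : ℕ) :
    {A : Σ k : ℕ, Matrix (Fin k) (Fin k) ℤ |
        1 ≤ A.1 ∧ (∀ i j, 0 ≤ A.2 i j) ∧ A.2.IsIrreducibleInt ∧
          A.2 ^ 2 = (n : ℤ) • A.2}.Finite := by
  refine (finite_sigma_matrix_of_card_le_of_mem_Icc (n ^ 2) ((n : ℤ) ^ 2)).subset ?_
  rintro ⟨k, A⟩ ⟨hk, hA0, hirr, hA⟩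
  have hpos := hirr.pos_of_sq_eq_smul n.cast_nonneg hA
  have hk_le : (k : ℤ) ≤ n ^ 2 := by
    simpa using (A.card_le_mul_diag_of_sq_eq_smul hpos hA ⟨0, hk⟩).trans
      (A.mul_diag_le_sq_of_sq_eq_smul hpos hA ⟨0, hk⟩)
  refine ⟨by exact_mod_cast hk_le, fun i j => ⟨hA0 i j, ?_⟩⟩
  exact (A.apply_le_mul_diag_of_sq_eq_smul hpos hA i j).trans
    (A.mul_diag_le_sq_of_sq_eq_smul hpos hA i)

/-- for any positive integer `n`, the set of irreducible nonnegative integer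
square matrices (of any size `k ≥ 1`) satisfying `A² = nA` is finite. -/
theorem finite_quasi_idempotent (n : ℕ) (hn : 0 < n) :
    {A : Σ k : ℕ, Matrix (Fin k) (Fin k) ℤ |
        1 ≤ A.1 ∧ (∀ i j, 0 ≤ A.2 i j) ∧ A.2.IsIrreducibleInt ∧
          A.2 ^ 2 = (n : ℤ) • A.2}.Finite :=
  finite_quasi_idempotent_general n
end

section
/- If A is an irreducible nonnegative integer k×k matrix with A² = nA for a positive integer n, then k ≤ n. -/
/-- Irreducibility of a nonnegative square integer matrix. -/
def Matrix.IsIrreducible' {k : ℕ} (A : Matrix (Fin k) (Fin k) ℤ) : Prop :=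
  ∀ i j, ∃ m : ℕ, 1 ≤ m ∧ 0 < (A ^ m) i j

/-!
From `A² = nA` we get `A^(m+1) = n^m A`, so a positive entry of some power of `A` forces the same
entry of `A` to be positive: by irreducibility every entry of `A` is a positive integer, hence `≥ 1`.
Now fix a column `j` and a row `i` at which `A i j` is minimal in that column. Then
`n A i j = ∑ₗ A i l A l j ≥ ∑ₗ A l j ≥ k A i j`, and dividing by `A i j > 0` gives `k ≤ n`.
-/

theorem pow_succ_eq_smul_of_sq_eq_smul_s7 {M S : Type*} [Monoid S] [Monoid M] [MulAction S M]
    [IsScalarTower S M M] {a : M} {c : S} (h : a ^ 2 = c • a) (m : ℕ) :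
    a ^ (m + 1) = c ^ m • a := by
  induction m with
  | zero => simp
  | succ m ih => rw [pow_succ, ih, smul_mul_assoc, ← sq, h, smul_smul, ← pow_succ]

namespace Matrix

variable {ι R : Type*} [Fintype ι] [CommRing R] [LinearOrder R] [IsStrictOrderedRing R]

theorem pos_of_pow_apply_pos_of_sq_eq_smul [DecidableEq ι] {A : Matrix ι ι R} {c : R}
    (hc : 0 ≤ c) (hA : A ^ 2 = c • A) {m : ℕ} (hm : 1 ≤ m) {i j : ι} (h : 0 < (A ^ m) i j) :
    0 < A i j := by
  obtain ⟨m, rfl⟩ := Nat.exists_eq_add_of_le' hm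
  rw [pow_succ_eq_smul_of_sq_eq_smul_s7 hA, smul_apply, smul_eq_mul] at h
  exact pos_of_mul_pos_right h (pow_nonneg hc m)

theorem card_le_of_sq_eq_smul_of_one_le [DecidableEq ι] [Nonempty ι] {A : Matrix ι ι R} {c : R}
    (hA : A ^ 2 = c • A) (h1 : ∀ i j, 1 ≤ A i j) : (Fintype.card ι : R) ≤ c := by
  obtain ⟨j⟩ := ‹Nonempty ι›
  obtain ⟨i, hmin⟩ := Finite.exists_min (fun l => A l j)
  have hpos : 0 < A i j := zero_lt_one.trans_le (h1 i j)
  refine le_of_mul_le_mul_right ?_ hpos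
  calc (Fintype.card ι : R) * A i j = ∑ _l : ι, A i j := by simp
    _ ≤ ∑ l, A i l * A l j := Finset.sum_le_sum fun l _ =>
        (hmin l).trans (le_mul_of_one_le_left (hpos.le.trans (hmin l)) (h1 i l))
    _ = c * A i j := by rw [← mul_apply, ← sq, hA, smul_apply, smul_eq_mul]

end Matrix

theorem quasi_idempotent_size_bound_general {k n : ℕ}
    (A : Matrix (Fin k) (Fin k) ℤ) (hirr : A.IsIrreducible')
    (hA : A ^ 2 = (n : ℤ) • A) : k ≤ n := by
  obtain _ | k := k
  · exact Nat.zero_le n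
  have hone : ∀ i j, 1 ≤ A i j := fun i j => by
    obtain ⟨m, hm, h⟩ := hirr i j
    exact Order.one_le_iff_pos.mpr
      (Matrix.pos_of_pow_apply_pos_of_sq_eq_smul (Int.natCast_nonneg n) hA hm h)
  have hcard := Matrix.card_le_of_sq_eq_smul_of_one_le hA hone
  rw [Fintype.card_fin] at hcard
  exact_mod_cast hcard

/-- if `A` is an irreducible nonnegative integer `k × k` matrix with `A² = nA`
for a positive integer `n`, then `k ≤ n`. -/
theorem quasi_idempotent_size_bound {k n : ℕ} (hn : 0 < n)
    (A : Matrix (Fin k) (Fin k) ℤ) (hA0 : ∀ i j, 0 ≤ A i j) (hirr : A.IsIrreducible')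
    (hA : A ^ 2 = (n : ℤ) • A) : k ≤ n :=
  quasi_idempotent_size_bound_general A hirr hA
end
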